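/- arXiv:2104.06537 — 4 statements merged into one kernel-verified Lean document; each statement's English description precedes it below -/
import Mathlib

section
/- Let ℬ be a locally finitely presentable category and B an object of ℬ. Every object of the coslice generator 𝒢_B is finitely presented in B↓ℬ. That is, if l : B → C is a pushout of a morphism k : K → K' between finitely presented objects along some a : K → B, then l is a finitely presented object of the coslice B↓ℬ. -/
open CategoryTheory Limits Opposite

universe w v u

section Defs

variable {𝒞 : Type u} [Category.{v} 𝒞]

/-- An object `K` is finitely presented if `Hom(K, -)` preserves filtered colimits. -/
def IsFinPres (K : 𝒞) : Prop :=
  ∀ (J : Type v) (_ : SmallCategory J) (_ : IsFiltered J),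
    Nonempty (PreservesColimitsOfShape J (coyoneda.obj (op K)))

/-- A category is locally finitely presentable if it is cocomplete and admits an essentially
small family of finitely presented objects such that every object is a filtered colimit of
objects of this family. -/
class IsLFP (𝒞 : Type u) [Category.{v} 𝒞] extends HasColimits 𝒞 : Prop where
  exists_gen : ∃ S : Set 𝒞, Small.{v} S ∧ (∀ K ∈ S, IsFinPres K) ∧
    ∀ X : 𝒞, ∃ (J : Type v) (_ : SmallCategory J) (_ : IsFiltered J)
      (D : J ⥤ 𝒞) (c : Cocone D) (_ : Nonempty (IsColimit c)),
      c.pt = X ∧ ∀ j, D.obj j ∈ S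

/-- `l : X ⟶ Y` belongs to the coslice generator `𝒢_X`: it is a pushout of a morphism
between finitely presented objects along a map into `X`. -/
def InGen {X Y : 𝒞} (l : X ⟶ Y) : Prop :=
  ∃ (K K' : 𝒞) (_ : IsFinPres K) (_ : IsFinPres K') (k : K ⟶ K') (a : K ⟶ X)
    (c : K' ⟶ Y), IsPushout a k l c

end Defs

/-!
Via the pushout square, a morphism `l ⟶ X` in `Under B` is the same as a map `g : K' ⟶ X.right`
with `k ≫ g = a ≫ X.hom`. Filtered categories are connected, so a filtered colimit in `Under B` is
also one in `ℬ`. A map from `l` to the colimit restricts to a map from `K'`, which factors through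
some stage since `K'` is finitely presented; the compatibility with `a` holds in the colimit, hence
at a later stage since `K` is finitely presented, and the pushout turns this into a factorization
of the original map. Two factorizations that agree in the colimit already agree on `K'` at a later
stage, and maps out of `l` are determined by their restriction to `K'`.
-/

section FinPres

variable {𝒞 : Type u} [Category.{v} 𝒞] {K : 𝒞}

theorem IsFinPres.exists_hom_of_isColimit (hK : IsFinPres K) {J : Type v} [SmallCategory J]
    [IsFiltered J] {D : J ⥤ 𝒞} {c : Cocone D} (hc : IsColimit c) (f : K ⟶ c.pt) :
    ∃ (j : J) (p : K ⟶ D.obj j), p ≫ c.ι.app j = f := by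
  have := (hK J inferInstance inferInstance).some
  exact Types.jointly_surjective_of_isColimit (isColimitOfPreserves (coyoneda.obj (op K)) hc) f

theorem IsFinPres.exists_eq_of_isColimit (hK : IsFinPres K) {J : Type v} [SmallCategory J]
    [IsFiltered J] {D : J ⥤ 𝒞} {c : Cocone D} (hc : IsColimit c) {i j : J}
    (f : K ⟶ D.obj i) (g : K ⟶ D.obj j) (h : f ≫ c.ι.app i = g ≫ c.ι.app j) :
    ∃ (n : J) (u : i ⟶ n) (v : j ⟶ n), f ≫ D.map u = g ≫ D.map v := by
  have := (hK J inferInstance inferInstance).some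
  exact (Types.FilteredColimit.isColimit_eq_iff _
    (isColimitOfPreserves (coyoneda.obj (op K)) hc)).mp h

theorem isFinPres_of_exists_hom_of_exists_eq
    (exists_hom : ∀ (J : Type v) [SmallCategory J] [IsFiltered J] (D : J ⥤ 𝒞) (c : Cocone D),
      IsColimit c → ∀ f : K ⟶ c.pt, ∃ (j : J) (p : K ⟶ D.obj j), p ≫ c.ι.app j = f)
    (exists_eq : ∀ (J : Type v) [SmallCategory J] [IsFiltered J] (D : J ⥤ 𝒞) (c : Cocone D),
      IsColimit c → ∀ (i j : J) (f : K ⟶ D.obj i) (g : K ⟶ D.obj j),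
        f ≫ c.ι.app i = g ≫ c.ι.app j →
          ∃ (n : J) (u : i ⟶ n) (v : j ⟶ n), f ≫ D.map u = g ≫ D.map v) :
    IsFinPres K := by
  intro J _ _
  refine ⟨⟨fun {D} => ⟨fun {c} hc => ⟨Types.FilteredColimit.isColimitOf _ _ ?_ ?_⟩⟩⟩⟩
  · intro f
    obtain ⟨j, p, hp⟩ := exists_hom J D c hc f
    exact ⟨j, p, hp.symm⟩
  · exact exists_eq J D c hc

end FinPres

namespace CategoryTheory.Under

variable {ℬ : Type u} [Category.{v} ℬ] {B K K' : ℬ} {l : Under B} {k : K ⟶ K'} {a : K ⟶ B}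
  {c : K' ⟶ l.right}

theorem hom_ext_of_isPushout (hpo : IsPushout a k l.hom c) {X : Under B} {f g : l ⟶ X}
    (h : c ≫ f.right = c ≫ g.right) : f = g :=
  UnderMorphism.ext (hpo.hom_ext (by simp) h)

theorem exists_hom_of_isPushout (hpo : IsPushout a k l.hom c) {X : Under B} (g : K' ⟶ X.right)
    (hg : k ≫ g = a ≫ X.hom) : ∃ f : l ⟶ X, c ≫ f.right = g :=
  ⟨homMk (hpo.desc X.hom g hg.symm) (hpo.inl_desc _ _ _), hpo.inr_desc _ _ _⟩

variable {J : Type v} [SmallCategory J] [IsFiltered J] {D : J ⥤ Under B} {cc : Cocone D}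

noncomputable def isColimitForgetMapCocone (hcc : IsColimit cc) :
    IsColimit ((Under.forget B).mapCocone cc) :=
  have := IsFiltered.isConnected J
  isColimitOfPreserves _ hcc

theorem exists_hom_of_isPushout_of_isColimit (hK : IsFinPres K) (hK' : IsFinPres K')
    (hpo : IsPushout a k l.hom c) (hcc : IsColimit cc) (x : l ⟶ cc.pt) :
    ∃ (j : J) (p : l ⟶ D.obj j), p ≫ cc.ι.app j = x := by
  obtain ⟨j, (g : K' ⟶ (D.obj j).right), hg⟩ :=
    hK'.exists_hom_of_isColimit (isColimitForgetMapCocone hcc) (c ≫ x.right)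
  replace hg : g ≫ (cc.ι.app j).right = c ≫ x.right := hg
  have hkg : (k ≫ g) ≫ (cc.ι.app j).right = (a ≫ (D.obj j).hom) ≫ (cc.ι.app j).right := by
    rw [Category.assoc, hg, ← hpo.w_assoc]
    simp
  obtain ⟨n, u, v, huv⟩ :=
    hK.exists_eq_of_isColimit (isColimitForgetMapCocone hcc) (k ≫ g) (a ≫ (D.obj j).hom) hkg
  obtain ⟨f, hf⟩ := exists_hom_of_isPushout hpo (g ≫ (D.map u).right) (by simpa using huv)
  refine ⟨n, f, hom_ext_of_isPushout hpo ?_⟩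
  rw [comp_right, reassoc_of% hf, ← comp_right, cc.w, hg]

theorem exists_eq_of_isPushout_of_isColimit (hK' : IsFinPres K')
    (hpo : IsPushout a k l.hom c) (hcc : IsColimit cc) {i j : J} (f : l ⟶ D.obj i)
    (g : l ⟶ D.obj j) (h : f ≫ cc.ι.app i = g ≫ cc.ι.app j) :
    ∃ (n : J) (u : i ⟶ n) (v : j ⟶ n), f ≫ D.map u = g ≫ D.map v := by
  have hcfg : (c ≫ f.right) ≫ (cc.ι.app i).right = (c ≫ g.right) ≫ (cc.ι.app j).right := by
    simp only [Category.assoc, ← comp_right, h]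
  obtain ⟨n, u, v, huv⟩ :=
    hK'.exists_eq_of_isColimit (isColimitForgetMapCocone hcc) (c ≫ f.right) (c ≫ g.right) hcfg
  exact ⟨n, u, v, hom_ext_of_isPushout hpo (by simpa using huv)⟩

end CategoryTheory.Under

theorem stmt6_general {ℬ : Type u} [Category.{v} ℬ] {B : ℬ}
    (l : Under B) (hl : InGen l.hom) : IsFinPres l := by
  obtain ⟨K, K', hK, hK', k, a, c, hpo⟩ := hl
  exact isFinPres_of_exists_hom_of_exists_eq
    (fun _ _ _ _ _ hcc => Under.exists_hom_of_isPushout_of_isColimit hK hK' hpo hcc)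
    (fun _ _ _ _ _ hcc _ _ => Under.exists_eq_of_isPushout_of_isColimit hK' hpo hcc)

/-- Every object of the coslice generator `𝒢_B` is finitely presented in `B↓ℬ`: if
`l : B ⟶ C` is a pushout of a morphism between finitely presented objects along a map
into `B`, then `l` is a finitely presented object of the coslice `Under B`. -/
theorem stmt6 {ℬ : Type u} [Category.{v} ℬ] [IsLFP ℬ] {B : ℬ}
    (l : Under B) (hl : InGen l.hom) : IsFinPres l :=
  stmt6_general l hl
end

section
/- Let ℬ be locally finitely presentable. Given a pushout square in ℬ with top k : K₀ → K₀', left a₀ : K₀ → B, bottom n : B → C, where K₀ and K₀' are finitely presented, and given an arrow a : K → C with K finitely presented, there exists a factorization a₀ = a₁ ∘ a₂ with a₂ : K₀ → K₁, a₁ : K₁ → B, K₁ finitely presented, such that a factors through the pushout of k along a₂: i.e., a factors through the canonical map (a₂)_*K₀' → C induced by the resulting pasting of pushout squares. -/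
open CategoryTheory Limits Opposite

universe w v u

/-!
Write `B` as a filtered colimit of finitely presented objects `D j`; as `K₀` is finitely
presented, `a₀` factors through some stage `f : K₀ ⟶ D j`. Pushing out along `k` is a left
adjoint `Under K₀ ⥤ Under K₀'`, and the forgetful functors from under categories create
connected colimits, so `C`, the pushout of `k` along `a₀`, is the filtered colimit over
`Under j` of the pushouts of `k` along the composites `K₀ ⟶ D j ⟶ D j'`. As `K` is finitely
presented, `a` factors through one of them.
-/

section

variable {𝒞 : Type u} [Category.{v} 𝒞]

theorem IsFinPres.exists_comp_ι_eq {K : 𝒞} (hK : IsFinPres K) {J : Type v} [SmallCategory J]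
    [IsFiltered J] {D : J ⥤ 𝒞} {cc : Cocone D} (t : IsColimit cc) (x : K ⟶ cc.pt) :
    ∃ (j : J) (y : K ⟶ D.obj j), y ≫ cc.ι.app j = x := by
  obtain ⟨_⟩ := hK J inferInstance inferInstance
  exact Types.jointly_surjective _ (isColimitOfPreserves (coyoneda.obj (op K)) t) x

theorem IsLFP.exists_isColimit_isFinPres [IsLFP 𝒞] (B : 𝒞) :
    ∃ (J : Type v) (_ : SmallCategory J) (_ : IsFiltered J) (D : J ⥤ 𝒞) (cc : Cocone D)
      (_ : IsColimit cc), cc.pt = B ∧ ∀ j, IsFinPres (D.obj j) := by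
  obtain ⟨S, -, hS, hgen⟩ := IsLFP.exists_gen (𝒞 := 𝒞)
  obtain ⟨J, _, _, D, cc, ⟨t⟩, hpt, hD⟩ := hgen B
  exact ⟨J, _, ‹_›, D, cc, t, hpt, fun j => hS _ (hD j)⟩

instance Under.preservesColimitsOfShape_map_of_isConnected {I : Type*} [Category I]
    [IsConnected I] {X Y : 𝒞} (f : X ⟶ Y) : PreservesColimitsOfShape I (Under.map f) :=
  have := preservesColimitsOfShape_of_natIso (J := I) (Under.mapForget f).symm
  preservesColimitsOfShape_of_reflects_of_preserves (Under.map f) (Under.forget X)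

theorem IsFinPres.exists_comp_pushout_desc_eq [HasPushouts 𝒞] {K K₀ K₀' C : 𝒞}
    (hK : IsFinPres K) {J : Type v} [SmallCategory J] [IsFiltered J] {D : J ⥤ 𝒞}
    {cc : Cocone D} (t : IsColimit cc) {j : J} (f : K₀ ⟶ D.obj j) {k : K₀ ⟶ K₀'}
    {n : cc.pt ⟶ C} {c : K₀' ⟶ C} (hpo : IsPushout (f ≫ cc.ι.app j) k n c) (x : K ⟶ C) :
    ∃ (g : Under j) (y : K ⟶ pushout (f ≫ D.map g.hom) k),
      y ≫ pushout.desc (cc.ι.app g.right ≫ n) c (by simpa using hpo.w) = x := by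
  have := IsFiltered.isConnected (Under j)
  let F := Under.map f ⋙ Under.pushout k ⋙ Under.forget K₀'
  -- the legs of `F.mapCocone (cc.underPost j)` are definitionally these canonical maps
  obtain ⟨g, y, hy⟩ : ∃ (g : Under j) (y : K ⟶ pushout (f ≫ D.map g.hom) k),
      y ≫ pushout.desc (cc.ι.app g.right ≫ pushout.inl _ _) (pushout.inr _ _)
        (by simpa using pushout.condition (f := f ≫ cc.ι.app j) (g := k)) =
      x ≫ hpo.isoPushout.hom :=
    hK.exists_comp_ι_eq (isColimitOfPreserves F (t.underPost j)) _
  refine ⟨g, y, ?_⟩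
  rw [← cancel_mono hpo.isoPushout.hom, Category.assoc, ← hy]
  congr 1
  apply pushout.hom_ext
  · rw [pushout.inl_desc_assoc, Category.assoc, hpo.inl_isoPushout_hom, pushout.inl_desc]
  · rw [pushout.inr_desc_assoc, hpo.inr_isoPushout_hom, pushout.inr_desc]

end

theorem stmt7_general {ℬ : Type u} [Category.{v} ℬ] [IsLFP ℬ] {K₀ K₀' B C K : ℬ}
    (hK₀ : IsFinPres K₀) (hK : IsFinPres K)
    (k : K₀ ⟶ K₀') (a₀ : K₀ ⟶ B) (n : B ⟶ C) (c : K₀' ⟶ C)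
    (hpo : IsPushout a₀ k n c) (a : K ⟶ C) :
    ∃ (K₁ : ℬ) (_ : IsFinPres K₁) (a₂ : K₀ ⟶ K₁) (a₁ : K₁ ⟶ B)
      (_ : a₂ ≫ a₁ = a₀) (P : ℬ) (p : K₁ ⟶ P) (q : K₀' ⟶ P)
      (_ : IsPushout a₂ k p q) (d : P ⟶ C),
      p ≫ d = a₁ ≫ n ∧ q ≫ d = c ∧ ∃ a' : K ⟶ P, a' ≫ d = a := by
  obtain ⟨J, _, _, D, cc, t, rfl, hD⟩ := IsLFP.exists_isColimit_isFinPres B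
  obtain ⟨j, f, rfl⟩ := hK₀.exists_comp_ι_eq t a₀
  obtain ⟨g, a', ha'⟩ := hK.exists_comp_pushout_desc_eq t f hpo a
  exact ⟨D.obj g.right, hD _, f ≫ D.map g.hom, cc.ι.app g.right, by simp, _, _, _,
    IsPushout.of_hasPushout _ _, _, pushout.inl_desc _ _ _, pushout.inr_desc _ _ _, a', ha'⟩

/-- Anel's lemma: given a pushout square with top `k : K₀ ⟶ K₀'` between finitely
presented objects, left `a₀ : K₀ ⟶ B`, bottom `n : B ⟶ C`, and an arrow `a : K ⟶ C`
with `K` finitely presented, there is a factorization `a₀ = a₂ ≫ a₁` through a finitely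
presented `K₁` such that `a` factors through the pushout of `k` along `a₂`, via the
canonical map to `C` induced by the pasting of pushout squares. -/
theorem stmt7 {ℬ : Type u} [Category.{v} ℬ] [IsLFP ℬ] {K₀ K₀' B C K : ℬ}
    (hK₀ : IsFinPres K₀) (hK₀' : IsFinPres K₀') (hK : IsFinPres K)
    (k : K₀ ⟶ K₀') (a₀ : K₀ ⟶ B) (n : B ⟶ C) (c : K₀' ⟶ C)
    (hpo : IsPushout a₀ k n c) (a : K ⟶ C) :
    ∃ (K₁ : ℬ) (_ : IsFinPres K₁) (a₂ : K₀ ⟶ K₁) (a₁ : K₁ ⟶ B)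
      (_ : a₂ ≫ a₁ = a₀) (P : ℬ) (p : K₁ ⟶ P) (q : K₀' ⟶ P)
      (_ : IsPushout a₂ k p q) (d : P ⟶ C),
      p ≫ d = a₁ ≫ n ∧ q ≫ d = c ∧ ∃ a' : K ⟶ P, a' ≫ d = a :=
  stmt7_general hK₀ hK k a₀ n c hpo a
end

section
/- Let ℬ be locally finitely presentable and B an object. Given a commuting triangle n = g ∘ n₁ with n₁ : B → C₁ and n₂ = g ∘ n₁ : B → C₂ both in the coslice generator 𝒢_B, there exist a finitely presented object K, morphisms m₁ : K → K₁, m₂ : K → K₂ and m : K₁ → K₂ between finitely presented objects with m₂ = m ∘ m₁, and a : K → B, such that n₁ is the pushout of m₁ along a, n₂ is the pushout of m₂ along a, and g : C₁ → C₂ is the pushout of m along the induced map a₁ : K₁ → C₁. In particular g belongs to 𝒢_{C₁}. -/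
open CategoryTheory Limits Opposite

universe w v u

/-!
Write `B` as a filtered colimit of finitely presented objects `D j` and factor the two attaching
maps `K ⟶ B`, `M ⟶ B` through a common `D j₀`. Over `Under j₀`, pushing out stagewise along
`k : K ⟶ K'` and `l : M ⟶ M'` presents `C₁` and `C₂` as filtered colimits of the finitely
presented objects `E j = D j ⊔_K K'` and `F j = D j ⊔_M M'`, and every square
`D j ⟶ E j` over `B ⟶ C₁` (resp. `D j ⟶ F j` over `B ⟶ C₂`) is a pushout. As `K'` is finitely
presented, `K' ⟶ C₁ ⟶ C₂` factors through some `F i`; as `K` is finitely presented, the two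
induced maps `K ⟶ F i` agree at a later stage `j`. This yields `m : E j ⟶ F j` under `D j`, and
the pasting law for pushouts makes the square `E j ⟶ F j` over `g : C₁ ⟶ C₂` a pushout.
-/

namespace CategoryTheory.Limits

section PushoutStages

variable {C : Type*} [Category* C] [HasPushouts C] {J : Type*} [Category* J]
  {D : J ⥤ C} {L L' : C} (u : ∀ j, L ⟶ D.obj j) (hu : ∀ {i j} (w : i ⟶ j), u i ≫ D.map w = u j)
  (k : L ⟶ L')

noncomputable abbrev pushoutStages : J ⥤ C where
  obj j := pushout (u j) k
  map {i j} w := pushout.desc (D.map w ≫ pushout.inl _ _) (pushout.inr _ _) (by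
    rw [← Category.assoc, hu, pushout.condition])
  map_id _ := by
    apply pushout.hom_ext <;> simp
  map_comp w w' := by
    apply pushout.hom_ext <;>
      simp [pushout.inl_desc, pushout.inr_desc, pushout.inl_desc_assoc, pushout.inr_desc_assoc]

lemma inl_pushoutStages_map {i j : J} (w : i ⟶ j) :
    pushout.inl _ _ ≫ (pushoutStages u hu k).map w = D.map w ≫ pushout.inl _ _ :=
  pushout.inl_desc _ _ _

lemma inr_pushoutStages_map {i j : J} (w : i ⟶ j) :
    pushout.inr _ _ ≫ (pushoutStages u hu k).map w = pushout.inr _ _ :=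
  pushout.inr_desc _ _ _

@[simps]
noncomputable def pushoutStagesInl : D ⟶ pushoutStages u hu k where
  app _ := pushout.inl _ _
  naturality _ _ w := (inl_pushoutStages_map u hu k w).symm

variable {c : Cocone D} {f : L ⟶ c.pt} (hf : ∀ j, u j ≫ c.ι.app j = f)
  {P : C} {n : c.pt ⟶ P} {c' : L' ⟶ P} (sq : IsPushout f k n c')

noncomputable abbrev pushoutStagesCocone : Cocone (pushoutStages u hu k) where
  pt := P
  ι.app j := pushout.desc (c.ι.app j ≫ n) c' (by rw [← Category.assoc, hf, sq.w])
  ι.naturality _ _ w := by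
    apply pushout.hom_ext <;>
      simp [pushout.inl_desc, pushout.inr_desc, pushout.inl_desc_assoc, pushout.inr_desc_assoc]

lemma inr_pushoutStagesCocone_ι_app (j : J) :
    pushout.inr _ _ ≫ (pushoutStagesCocone u hu k hf sq).ι.app j = c' :=
  pushout.inr_desc _ _ _

lemma isPushout_pushoutStagesCocone_ι_app (j : J) :
    IsPushout (c.ι.app j) (pushout.inl _ _) n ((pushoutStagesCocone u hu k hf sq).ι.app j) :=
  .of_left (by simpa [hf, pushout.inr_desc] using sq) (by simp [pushout.inl_desc])
    (.of_hasPushout (u j) k)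

lemma pushoutStagesCocone_hom_ext [Nonempty J] (hc : IsColimit c) {T : C} {g₁ g₂ : P ⟶ T}
    (h : ∀ j, (pushoutStagesCocone u hu k hf sq).ι.app j ≫ g₁ =
      (pushoutStagesCocone u hu k hf sq).ι.app j ≫ g₂) : g₁ = g₂ := by
  apply sq.hom_ext
  · exact hc.hom_ext fun j ↦ by simpa [pushout.inl_desc_assoc] using pushout.inl _ _ ≫= h j
  · simpa [pushout.inr_desc_assoc] using pushout.inr _ _ ≫= h (Classical.arbitrary J)

noncomputable def isColimitPushoutStagesCocone [IsConnected J] (hc : IsColimit c) :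
    IsColimit (pushoutStagesCocone u hu k hf sq) :=
  let j₀ := Classical.arbitrary J
  have inr_ι_app_eq (s : Cocone (pushoutStages u hu k)) (j : J) :
      pushout.inr _ _ ≫ s.ι.app j = pushout.inr _ _ ≫ s.ι.app j₀ :=
    constant_of_preserves_morphisms (fun j ↦ (pushout.inr (u j) k ≫ s.ι.app j : L' ⟶ s.pt))
      (fun _ _ w ↦ by rw [← s.w w, ← Category.assoc, inr_pushoutStages_map u hu k]) j j₀
  let restrict (s : Cocone (pushoutStages u hu k)) :=
    (Cocone.precompose (pushoutStagesInl u hu k)).obj s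
  let desc (s : Cocone (pushoutStages u hu k)) : P ⟶ s.pt :=
    sq.desc (hc.desc (restrict s)) (pushout.inr _ _ ≫ s.ι.app j₀) (by
      rw [← hf j₀, Category.assoc, hc.fac]
      simp [restrict, pushout.condition_assoc])
  have fac (s : Cocone (pushoutStages u hu k)) (j : J) :
      (pushoutStagesCocone u hu k hf sq).ι.app j ≫ desc s = s.ι.app j := by
    apply pushout.hom_ext
    · simp [desc, restrict, pushout.inl_desc_assoc]
    · simp [desc, inr_ι_app_eq s j, pushout.inr_desc_assoc]
  { desc, fac
    uniq s m hm := pushoutStagesCocone_hom_ext u hu k hf sq hc fun j ↦ (hm j).trans (fac s j).symm }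

end PushoutStages

end CategoryTheory.Limits

namespace CategoryTheory

open Limits

attribute [local instance] Cardinal.fact_isRegular_aleph0

variable {C : Type u} [Category.{v} C]

theorem isFinPres_iff_isFinitelyPresentable {X : C} :
    IsFinPres X ↔ IsFinitelyPresentable.{v} X := by
  rw [isFinitelyPresentable_iff_preservesFilteredColimits]
  exact ⟨fun h ↦ ⟨fun J _ _ ↦ (h J _ ‹_›).some⟩, fun h J _ _ ↦ ⟨h.1 J⟩⟩

instance isFinitelyPresentable_pushout {Z X Y : C} (f : Z ⟶ X) (g : Z ⟶ Y) [HasPushout f g]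
    [IsFinitelyPresentable.{v} Z] [IsFinitelyPresentable.{v} X] [IsFinitelyPresentable.{v} Y] :
    IsFinitelyPresentable.{v} (pushout f g) := by
  have : ∀ j, IsFinitelyPresentable.{v} ((span f g).obj j) := by
    rintro (_ | (_ | _)) <;> assumption
  exact isCardinalPresentable_of_isColimit' _ (colimit.isColimit _) _
    ((hasCardinalLT_aleph0_iff _).2 inferInstance)

theorem IsFinitelyPresentable.exists_common_hom_of_isColimit {J : Type v} [SmallCategory J]
    [IsFiltered J] {D : J ⥤ C} {c : Cocone D} (hc : IsColimit c) {X Y : C}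
    [IsFinitelyPresentable.{v} X] [IsFinitelyPresentable.{v} Y] (f : X ⟶ c.pt) (g : Y ⟶ c.pt) :
    ∃ (j : J) (f' : X ⟶ D.obj j) (g' : Y ⟶ D.obj j),
      f' ≫ c.ι.app j = f ∧ g' ≫ c.ι.app j = g := by
  obtain ⟨i, f', rfl⟩ := IsFinitelyPresentable.exists_hom_of_isColimit hc f
  obtain ⟨j, g', rfl⟩ := IsFinitelyPresentable.exists_hom_of_isColimit hc g
  exact ⟨IsFiltered.max i j, f' ≫ D.map (IsFiltered.leftToMax i j),
    g' ≫ D.map (IsFiltered.rightToMax i j), by simp, by simp⟩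

variable [HasPushouts C] {J : Type v} [SmallCategory J] [IsFiltered J] {D : J ⥤ C} {c : Cocone D}

section

variable (hc : IsColimit c) {K K' : C} {k : K ⟶ K'}
  (u : ∀ j, K ⟶ D.obj j) (hu : ∀ {i j} (w : i ⟶ j), u i ≫ D.map w = u j)
  {a : K ⟶ c.pt} (hua : ∀ j, u j ≫ c.ι.app j = a) {C₁ : C} {n₁ : c.pt ⟶ C₁} {a₁ : K' ⟶ C₁}
  (sq₁ : IsPushout a k n₁ a₁) {M M' : C} {l : M ⟶ M'}
  (v : ∀ j, M ⟶ D.obj j) (hv : ∀ {i j} (w : i ⟶ j), v i ≫ D.map w = v j)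
  {b : M ⟶ c.pt} (hvb : ∀ j, v j ≫ c.ι.app j = b) {C₂ : C} {g : C₁ ⟶ C₂} {b₁ : M' ⟶ C₂}
  (sq₂ : IsPushout b l (n₁ ≫ g) b₁)

include hc in
theorem exists_isPushout_pushoutStagesCocone_ι_app
    [IsFinitelyPresentable.{v} K] [IsFinitelyPresentable.{v} K'] :
    ∃ (j : J) (m : pushout (u j) k ⟶ pushout (v j) l), pushout.inl _ _ ≫ m = pushout.inl _ _ ∧
      IsPushout ((pushoutStagesCocone u hu k hua sq₁).ι.app j) m g
        ((pushoutStagesCocone v hv l hvb sq₂).ι.app j) := by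
  have := IsFiltered.isConnected J
  have hF := isColimitPushoutStagesCocone v hv l hvb sq₂ hc
  obtain ⟨i, t, ht⟩ := IsFinitelyPresentable.exists_hom_of_isColimit hF (a₁ ≫ g)
  obtain ⟨j, w, hw⟩ := exists_eq_of_preservesColimit_coyoneda_self hF (k ≫ t)
    (u i ≫ pushout.inl _ _) (by
      rw [Category.assoc, ht, ← sq₁.w_assoc, ← hua i]
      simp [pushout.inl_desc])
  have hm : u j ≫ pushout.inl _ _ = k ≫ t ≫ (pushoutStages v hv l).map w := by
    rw [← hu w, Category.assoc, ← inl_pushoutStages_map v hv l w, ← Category.assoc,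
      ← Category.assoc, hw]
  refine ⟨j, pushout.desc (pushout.inl _ _) (t ≫ (pushoutStages v hv l).map w) hm,
    pushout.inl_desc _ _ _, .of_top ?_ ?_ (isPushout_pushoutStagesCocone_ι_app u hu k hua sq₁ j)⟩
  · rw [pushout.inl_desc]
    exact isPushout_pushoutStagesCocone_ι_app v hv l hvb sq₂ j
  · apply pushout.hom_ext
    · simp [pushout.inl_desc, pushout.inl_desc_assoc]
    · rw [← Category.assoc, inr_pushoutStagesCocone_ι_app u hu k hua sq₁, pushout.inr_desc_assoc,
        Category.assoc, Cocone.w, ht]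

end

theorem exists_isPushout_triangle_lift [∀ j, IsFinitelyPresentable.{v} (D.obj j)]
    (hc : IsColimit c) {j₀ : J} {K K' M M' : C} [IsFinitelyPresentable.{v} K]
    [IsFinitelyPresentable.{v} K'] [IsFinitelyPresentable.{v} M] [IsFinitelyPresentable.{v} M']
    {k : K ⟶ K'} {l : M ⟶ M'} {a : K ⟶ D.obj j₀} {b : M ⟶ D.obj j₀} {C₁ C₂ : C}
    {n₁ : c.pt ⟶ C₁} {g : C₁ ⟶ C₂} {a' : K' ⟶ C₁} {b' : M' ⟶ C₂}
    (sq₁ : IsPushout (a ≫ c.ι.app j₀) k n₁ a') (sq₂ : IsPushout (b ≫ c.ι.app j₀) l (n₁ ≫ g) b') :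
    ∃ (K₀ K₁ K₂ : C) (_ : IsFinitelyPresentable.{v} K₀) (_ : IsFinitelyPresentable.{v} K₁)
      (_ : IsFinitelyPresentable.{v} K₂) (m₁ : K₀ ⟶ K₁) (m : K₁ ⟶ K₂) (a₀ : K₀ ⟶ c.pt)
      (a₁ : K₁ ⟶ C₁) (a₂ : K₂ ⟶ C₂),
      IsPushout a₀ m₁ n₁ a₁ ∧ IsPushout a₀ (m₁ ≫ m) (n₁ ≫ g) a₂ ∧ IsPushout a₁ m g a₂ := by
  have hc' := (Functor.Final.isColimitWhiskerEquiv (Under.forget j₀) c).symm hc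
  have (i : Under j₀) : IsFinitelyPresentable.{v} ((Under.forget j₀ ⋙ D).obj i) :=
    inferInstanceAs (IsFinitelyPresentable.{v} (D.obj i.right))
  let u (i : Under j₀) : K ⟶ (Under.forget j₀ ⋙ D).obj i := a ≫ D.map i.hom
  let v (i : Under j₀) : M ⟶ (Under.forget j₀ ⋙ D).obj i := b ≫ D.map i.hom
  have hu {i i'} (w : i ⟶ i') : u i ≫ (Under.forget j₀ ⋙ D).map w = u i' :=
    (Category.assoc _ _ _).trans (a ≫= (D.map_comp _ _).symm.trans (congrArg D.map (Under.w w)))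
  have hv {i i'} (w : i ⟶ i') : v i ≫ (Under.forget j₀ ⋙ D).map w = v i' :=
    (Category.assoc _ _ _).trans (b ≫= (D.map_comp _ _).symm.trans (congrArg D.map (Under.w w)))
  have hua (i) : u i ≫ (c.whisker (Under.forget j₀)).ι.app i = a ≫ c.ι.app j₀ :=
    (Category.assoc _ _ _).trans (a ≫= c.w i.hom)
  have hvb (i) : v i ≫ (c.whisker (Under.forget j₀)).ι.app i = b ≫ c.ι.app j₀ :=
    (Category.assoc _ _ _).trans (b ≫= c.w i.hom)
  obtain ⟨i, m, hm, sq₃⟩ :=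
    exists_isPushout_pushoutStagesCocone_ι_app hc' u hu hua sq₁ v hv hvb sq₂
  refine ⟨D.obj i.right, _, _, inferInstance, isFinitelyPresentable_pushout (u i) k,
    isFinitelyPresentable_pushout (v i) l, pushout.inl _ _, m,
    c.ι.app i.right, _, _, isPushout_pushoutStagesCocone_ι_app u hu k hua sq₁ i,
    hm ▸ isPushout_pushoutStagesCocone_ι_app v hv l hvb sq₂ i, sq₃⟩

end CategoryTheory

/-- Given a commuting triangle `n₂ = n₁ ≫ g` under `B` with `n₁` and `n₂` in the coslice
generator `𝒢_B`, the whole triangle can be lifted: there is a triangle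
`m₂ = m₁ ≫ m` between finitely presented objects and `a : K ⟶ B` such that `n₁`, `n₂`
and `g` are respectively pushouts of `m₁`, `m₁ ≫ m` and `m`; in particular `g ∈ 𝒢_{C₁}`. -/
theorem stmt8 {ℬ : Type u} [Category.{v} ℬ] [IsLFP ℬ] {B C₁ C₂ : ℬ}
    (n₁ : B ⟶ C₁) (g : C₁ ⟶ C₂)
    (h₁ : InGen n₁) (h₂ : InGen (n₁ ≫ g)) :
    ∃ (K K₁ K₂ : ℬ) (_ : IsFinPres K) (_ : IsFinPres K₁) (_ : IsFinPres K₂)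
      (m₁ : K ⟶ K₁) (m : K₁ ⟶ K₂) (a : K ⟶ B) (a₁ : K₁ ⟶ C₁) (a₂ : K₂ ⟶ C₂),
      IsPushout a m₁ n₁ a₁ ∧ IsPushout a (m₁ ≫ m) (n₁ ≫ g) a₂ ∧
        IsPushout a₁ m g a₂ ∧ InGen g := by
  obtain ⟨K, K', hK, hK', k, a, a₁, sq₁⟩ := h₁
  obtain ⟨M, M', hM, hM', l, b, b₁, sq₂⟩ := h₂
  rw [isFinPres_iff_isFinitelyPresentable] at hK hK' hM hM'
  obtain ⟨S, -, hS, hB⟩ := IsLFP.exists_gen (𝒞 := ℬ)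
  obtain ⟨J, _, _, D, c, ⟨hc⟩, rfl, hD⟩ := hB B
  have (j : J) := isFinPres_iff_isFinitelyPresentable.mp (hS _ (hD j))
  obtain ⟨j₀, a, b, rfl, rfl⟩ :=
    IsFinitelyPresentable.exists_common_hom_of_isColimit hc a b
  obtain ⟨K₀, K₁, K₂, hK₀, hK₁, hK₂, m₁, m, a₀, a₁, a₂, sq₁, sq₂, sq₃⟩ :=
    exists_isPushout_triangle_lift hc sq₁ sq₂
  rw [← isFinPres_iff_isFinitelyPresentable] at hK₀ hK₁ hK₂
  exact ⟨K₀, K₁, K₂, hK₀, hK₁, hK₂, m₁, m, a₀, a₁, a₂, sq₁, sq₂, sq₃,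
    K₁, K₂, hK₁, hK₂, m, a₁, a₂, sq₃⟩
end

section
/- Let F* ⊣ F_* : 𝒜 → ℬ be a morphism of locally finitely presentable categories. The codomain projection cod : F_*↓ℬ → ℬ has a left adjoint sending B to the object (0, F_*(0) + B, pushout of 0 → B along the unit 0 → F_*F*(0) ≅ F_*(0)), and this left adjoint preserves finitely presented objects; hence cod is part of a morphism of locally finitely presentable categories. -/
open CategoryTheory Limits Opposite

universe w v u

variable {𝒜 : Type u} {ℬ : Type w} [Category.{v} 𝒜] [Category.{v} ℬ] [IsLFP 𝒜] [IsLFP ℬ]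

/-- The object `(0, F_*(0) ⨿ B, coprod.inl)` of the comma category `F_*↓ℬ`: the pushout of
`0 ⟶ B` along the unit `0 ⟶ F_*F*(0) ≅ F_*(0)` is the coproduct inclusion
`F_*(0) ⟶ F_*(0) ⨿ B`. -/
noncomputable def commaCodLeftObj (Fst : 𝒜 ⥤ ℬ) (B : ℬ) : Comma Fst (𝟭 ℬ) where
  left := ⊥_ 𝒜
  right := Fst.obj (⊥_ 𝒜) ⨿ B
  hom := coprod.inl

/-- The first component of a morphism out of `(0, F_*(0) ⨿ B, inl)` is forced, and the
commutative square forces its second component on `F_*(0)`. -/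
noncomputable def commaCodLeftObjHomEquiv (Fst : 𝒜 ⥤ ℬ) (B : ℬ) (X : Comma Fst (𝟭 ℬ)) :
    (commaCodLeftObj Fst B ⟶ X) ≃ (B ⟶ X.right) where
  toFun φ := coprod.inr ≫ φ.right
  invFun g :=
    { left := initial.to _
      right := coprod.desc (Fst.map (initial.to _) ≫ X.hom) g
      w := (coprod.inl_desc _ _).symm }
  left_inv φ := by
    ext
    · exact initial.hom_ext _ _
    · apply coprod.hom_ext
      · rw [coprod.inl_desc, initial.hom_ext (initial.to X.left) φ.left]
        exact φ.w
      · exact coprod.inr_desc _ _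
  right_inv g := coprod.inr_desc _ _

noncomputable def commaCodLeftAdjoint (Fst : 𝒜 ⥤ ℬ) : ℬ ⥤ Comma Fst (𝟭 ℬ) :=
  Adjunction.leftAdjointOfEquiv (G := Comma.snd Fst (𝟭 ℬ)) (commaCodLeftObjHomEquiv Fst)
    (fun _ _ _ _ _ => (Category.assoc _ _ _).symm)

noncomputable def commaCodAdjunction (Fst : 𝒜 ⥤ ℬ) :
    commaCodLeftAdjoint Fst ⊣ Comma.snd Fst (𝟭 ℬ) :=
  Adjunction.adjunctionOfEquivLeft _ _

theorem CategoryTheory.Adjunction.isFinPres_obj {𝒞 𝒟 : Type*} [Category.{v} 𝒞] [Category.{v} 𝒟]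
    {F : 𝒞 ⥤ 𝒟} {G : 𝒟 ⥤ 𝒞} (adj : F ⊣ G)
    (hG : ∀ (J : Type v) (_ : SmallCategory J) (_ : IsFiltered J),
      Nonempty (PreservesColimitsOfShape J G))
    {K : 𝒞} (hK : IsFinPres K) : IsFinPres (F.obj K) := fun J _ hJ => by
  have := (hG J _ hJ).some
  have := (hK J _ hJ).some
  exact ⟨preservesColimitsOfShape_of_natIso (F := G ⋙ coyoneda.obj (Opposite.op K))
    (adj.compCoyonedaIso.app (Opposite.op K)).symm⟩

theorem stmt19_general (Fst : 𝒜 ⥤ ℬ)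
    (hfin : ∀ (J : Type v) (_ : SmallCategory J) (_ : IsFiltered J),
      Nonempty (PreservesColimitsOfShape J Fst)) :
    ∃ L : ℬ ⥤ Comma Fst (𝟭 ℬ),
      Nonempty (L ⊣ Comma.snd Fst (𝟭 ℬ)) ∧
        (∀ B : ℬ, Nonempty (L.obj B ≅ commaCodLeftObj Fst B)) ∧
        ∀ B : ℬ, IsFinPres B → IsFinPres (L.obj B) := by
  refine ⟨commaCodLeftAdjoint Fst, ⟨commaCodAdjunction Fst⟩, fun B => ⟨Iso.refl _⟩,
    fun B => (commaCodAdjunction Fst).isFinPres_obj fun J _ hJ => ?_⟩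
  have := (hfin J _ hJ).some
  exact ⟨inferInstance⟩

/-- For a morphism of LFP categories `F* ⊣ F_*`, the codomain projection
`cod : F_*↓ℬ ⥤ ℬ` has a left adjoint sending `B` to `(0, F_*(0) ⨿ B, coprod.inl)`, and
this left adjoint preserves finitely presented objects; hence `cod` is part of a morphism
of locally finitely presentable categories. -/
theorem stmt19 (Fst : 𝒜 ⥤ ℬ) (Fup : ℬ ⥤ 𝒜) (adj : Fup ⊣ Fst)
    (hcont : Nonempty (PreservesLimits Fst))
    (hfin : ∀ (J : Type v) (_ : SmallCategory J) (_ : IsFiltered J),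
      Nonempty (PreservesColimitsOfShape J Fst)) :
    ∃ L : ℬ ⥤ Comma Fst (𝟭 ℬ),
      Nonempty (L ⊣ Comma.snd Fst (𝟭 ℬ)) ∧
        (∀ B : ℬ, Nonempty (L.obj B ≅ commaCodLeftObj Fst B)) ∧
        ∀ B : ℬ, IsFinPres B → IsFinPres (L.obj B) :=
  stmt19_general Fst hfin
end
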